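/- arXiv:0906.3108 — 3 statements merged into one kernel-verified Lean document; each statement's English description precedes it below -/
import Mathlib

section
/- Let S : Θ → M_d(ℝ) be a twice continuously differentiable map on an open set Θ ⊆ ℝ^{d₀} taking values in symmetric positive definite d×d matrices, and fix θ* ∈ Θ. Then the Hessian at θ = θ* of the function θ ↦ Q(θ) := Tr(S(θ*)^{-1} S(θ) - I_d) - log det(S(θ*)^{-1} S(θ)) equals the matrix Ξ with entries Ξ_{ij} = Tr((∂_{θ_i} S) S^{-1} (∂_{θ_j} S) S^{-1}) evaluated at θ*. -/
/-! With `A = S θ*`, Jacobi's formula gives `∂ᵢQ θ = tr((A⁻¹ - S(θ)⁻¹) ∂ᵢS θ)` on `Θ`.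
The factor `A⁻¹ - S(θ)⁻¹` vanishes at `θ*`, so differentiating once more only its derivative
`S⁻¹ (∂ⱼS) S⁻¹` survives the product rule, and cyclicity of the trace gives `Ξᵢⱼ`. -/

open Matrix

section

variable {𝕜 E : Type*} [NontriviallyNormedField 𝕜] [NormedAddCommGroup E] [NormedSpace 𝕜 E]

noncomputable def matrixFDeriv {l m : Type*} (f : E → Matrix l m 𝕜) (x v : E) : Matrix l m 𝕜 :=
  of fun i j => fderiv 𝕜 (fun y => f y i j) x v

@[simp]
lemma matrixFDeriv_apply {l m : Type*} (f : E → Matrix l m 𝕜) (x v : E) (i : l) (j : m) :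
    matrixFDeriv f x v i j = fderiv 𝕜 (fun y => f y i j) x v := rfl

lemma differentiableAt_matrix_mul_apply {l m n : Type*} [Fintype m]
    {f : E → Matrix l m 𝕜} {g : E → Matrix m n 𝕜} {x : E}
    (hf : ∀ i j, DifferentiableAt 𝕜 (fun y => f y i j) x)
    (hg : ∀ i j, DifferentiableAt 𝕜 (fun y => g y i j) x) (i : l) (k : n) :
    DifferentiableAt 𝕜 (fun y => (f y * g y) i k) x := by
  simp only [mul_apply]
  fun_prop

lemma matrixFDeriv_mul {l m n : Type*} [Fintype m]
    {f : E → Matrix l m 𝕜} {g : E → Matrix m n 𝕜} {x : E}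
    (hf : ∀ i j, DifferentiableAt 𝕜 (fun y => f y i j) x)
    (hg : ∀ i j, DifferentiableAt 𝕜 (fun y => g y i j) x) (v : E) :
    matrixFDeriv (fun y => f y * g y) x v =
      matrixFDeriv f x v * g x + f x * matrixFDeriv g x v := by
  ext i k
  simp only [matrixFDeriv_apply, mul_apply, Matrix.add_apply]
  rw [fderiv_fun_sum fun j _ => (hf i j).fun_mul (hg j k)]
  simp [fderiv_fun_mul (hf _ _) (hg _ _), Finset.sum_add_distrib, mul_comm, add_comm]

@[simp]
lemma matrixFDeriv_const {l m : Type*} (A : Matrix l m 𝕜) (x v : E) :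
    matrixFDeriv (fun _ => A) x v = 0 := by
  ext; simp

@[simp]
lemma matrixFDeriv_const_sub {l m : Type*} (A : Matrix l m 𝕜) (f : E → Matrix l m 𝕜) (x v : E) :
    matrixFDeriv (fun y => A - f y) x v = -matrixFDeriv f x v := by
  ext
  simp [fderiv_const_sub]

lemma fderiv_matrix_trace {n : Type*} [Fintype n] {f : E → Matrix n n 𝕜} {x : E}
    (hf : ∀ i, DifferentiableAt 𝕜 (fun y => f y i i) x) (v : E) :
    fderiv 𝕜 (fun y => (f y).trace) x v = (matrixFDeriv f x v).trace := by
  simp only [trace, diag_apply]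
  rw [fderiv_fun_sum fun i _ => hf i]
  simp

lemma differentiableAt_matrix_det {n : Type*} [Fintype n] [DecidableEq n]
    {f : E → Matrix n n 𝕜} {x : E}
    (hf : ∀ i j, DifferentiableAt 𝕜 (fun y => f y i j) x) :
    DifferentiableAt 𝕜 (fun y => (f y).det) x := by
  simp only [det_apply']
  fun_prop

lemma fderiv_matrix_det_of_eq_one {n : Type*} [Fintype n] [DecidableEq n]
    {f : E → Matrix n n 𝕜} {x : E}
    (hf : ∀ i j, DifferentiableAt 𝕜 (fun y => f y i j) x) (hx : f x = 1) (v : E) :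
    fderiv 𝕜 (fun y => (f y).det) x v = (matrixFDeriv f x v).trace := by
  have hprod (σ : Equiv.Perm n) := HasFDerivAt.finsetProd (u := Finset.univ)
    fun i _ => (hf (σ i) i).hasFDerivAt
  simp only [det_apply']
  rw [fderiv_fun_sum fun σ _ => ((hprod σ).differentiableAt.const_mul _)]
  simp only [fderiv_const_mul (hprod _).differentiableAt, (hprod _).fderiv]
  rw [_root_.sum_apply, Fintype.sum_eq_single 1]
  · simp [hx, trace]
  · -- `σ ≠ 1` moves some `a ≠ i`, so the product picks up an off-diagonal entry of `1`
    intro σ hσ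
    suffices ∀ i, ∏ j ∈ Finset.univ.erase i, f x (σ j) j = 0 by simp [this]
    intro i
    obtain ⟨a, ha, hai⟩ := Finset.exists_mem_ne (Equiv.Perm.two_le_card_support_of_ne_one hσ) i
    refine Finset.prod_eq_zero (Finset.mem_erase.2 ⟨hai, Finset.mem_univ a⟩) ?_
    rw [hx, one_apply_ne (Equiv.Perm.mem_support.1 ha)]

lemma fderiv_matrix_det {n : Type*} [Fintype n] [DecidableEq n]
    {f : E → Matrix n n 𝕜} {x : E}
    (hf : ∀ i j, DifferentiableAt 𝕜 (fun y => f y i j) x) (hx : IsUnit (f x).det) (v : E) :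
    fderiv 𝕜 (fun y => (f y).det) x v = (f x).det * ((f x)⁻¹ * matrixFDeriv f x v).trace := by
  have hg : ∀ i j, DifferentiableAt 𝕜 (fun y => ((f x)⁻¹ * f y) i j) x :=
    differentiableAt_matrix_mul_apply (fun _ _ => differentiableAt_const _) hf
  have hfactor : (fun y => (f y).det) = fun y => (f x).det * ((f x)⁻¹ * f y).det := by
    funext y
    rw [← det_mul, mul_nonsing_inv_cancel_left _ _ hx]
  rw [hfactor, fderiv_const_mul (differentiableAt_matrix_det hg), _root_.smul_apply,
    smul_eq_mul, fderiv_matrix_det_of_eq_one hg (nonsing_inv_mul _ hx),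
    matrixFDeriv_mul (f := fun _ => (f x)⁻¹) (fun _ _ => differentiableAt_const _) hf,
    matrixFDeriv_const, Matrix.zero_mul, zero_add]

lemma differentiableAt_matrix_inv_apply {n : Type*} [Fintype n] [DecidableEq n]
    {f : E → Matrix n n 𝕜} {x : E}
    (hf : ∀ i j, DifferentiableAt 𝕜 (fun y => f y i j) x) (hx : IsUnit (f x).det) (i j : n) :
    DifferentiableAt 𝕜 (fun y => (f y)⁻¹ i j) x := by
  have hcramer : (fun y => (f y)⁻¹ i j) =
      fun y => ((f y).det)⁻¹ * ((f y).updateRow j (Pi.single i 1)).det := by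
    funext y
    rw [inv_def, Matrix.smul_apply, Ring.inverse_eq_inv', smul_eq_mul, adjugate_apply]
  rw [hcramer]
  refine ((differentiableAt_matrix_det hf).inv hx.ne_zero).mul
    (differentiableAt_matrix_det fun a b => ?_)
  rcases eq_or_ne a j with rfl | h
  · simp
  · simpa [updateRow_ne h] using hf a b

lemma matrixFDeriv_inv {n : Type*} [Fintype n] [DecidableEq n]
    {f : E → Matrix n n 𝕜} {x : E}
    (hf : ∀ i j, DifferentiableAt 𝕜 (fun y => f y i j) x) (hx : IsUnit (f x).det) (v : E) :
    matrixFDeriv (fun y => (f y)⁻¹) x v = -((f x)⁻¹ * matrixFDeriv f x v * (f x)⁻¹) := by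
  have hinv_mul : ∀ᶠ y in nhds x, (f y)⁻¹ * f y = 1 := by
    filter_upwards [(differentiableAt_matrix_det hf).continuousAt.eventually_ne hx.ne_zero]
      with y hy using nonsing_inv_mul _ hy.isUnit
  have h0 : matrixFDeriv (fun y => (f y)⁻¹ * f y) x v = 0 := by
    ext i j
    have hconst : (fun y => ((f y)⁻¹ * f y) i j) =ᶠ[nhds x] fun _ => (1 : Matrix n n 𝕜) i j :=
      hinv_mul.mono fun y hy => congrFun (congrFun hy i) j
    rw [matrixFDeriv_apply, hconst.fderiv_eq]
    simp
  rw [matrixFDeriv_mul (differentiableAt_matrix_inv_apply hf hx) hf] at h0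
  calc matrixFDeriv (fun y => (f y)⁻¹) x v
      = (matrixFDeriv (fun y => (f y)⁻¹) x v * f x + (f x)⁻¹ * matrixFDeriv f x v) * (f x)⁻¹
          - (f x)⁻¹ * matrixFDeriv f x v * (f x)⁻¹ := by
        rw [Matrix.add_mul, Matrix.mul_assoc, mul_nonsing_inv _ hx, Matrix.mul_one,
          add_sub_cancel_right]
    _ = _ := by rw [h0, Matrix.zero_mul, zero_sub]

end

section Real

variable {E : Type*} [NormedAddCommGroup E] [NormedSpace ℝ E]

lemma fderiv_log_det {n : Type*} [Fintype n] [DecidableEq n]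
    {f : E → Matrix n n ℝ} {x : E}
    (hf : ∀ i j, DifferentiableAt ℝ (fun y => f y i j) x) (hx : IsUnit (f x).det) (v : E) :
    fderiv ℝ (fun y => Real.log (f y).det) x v = ((f x)⁻¹ * matrixFDeriv f x v).trace := by
  rw [fderiv.log (differentiableAt_matrix_det hf) hx.ne_zero, _root_.smul_apply,
    fderiv_matrix_det hf hx, smul_eq_mul, inv_mul_cancel_left₀ hx.ne_zero]

noncomputable def logDetDivergence {n : Type*} [Fintype n] [DecidableEq n]
    (A B : Matrix n n ℝ) : ℝ :=
  (A⁻¹ * B - 1).trace - Real.log (A⁻¹ * B).det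

lemma fderiv_logDetDivergence {n : Type*} [Fintype n] [DecidableEq n] {A : Matrix n n ℝ}
    {f : E → Matrix n n ℝ} {x : E} (hA : IsUnit A.det)
    (hf : ∀ i j, DifferentiableAt ℝ (fun y => f y i j) x) (hx : IsUnit (f x).det) (v : E) :
    fderiv ℝ (fun y => logDetDivergence A (f y)) x v =
      ((A⁻¹ - (f x)⁻¹) * matrixFDeriv f x v).trace := by
  have hg : ∀ i j, DifferentiableAt ℝ (fun y => (A⁻¹ * f y) i j) x :=
    differentiableAt_matrix_mul_apply (fun _ _ => differentiableAt_const _) hf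
  have hgx : IsUnit (A⁻¹ * f x).det := by
    rw [det_mul]
    exact (isUnit_nonsing_inv_det A hA).mul hx
  have hDg : matrixFDeriv (fun y => A⁻¹ * f y) x v = A⁻¹ * matrixFDeriv f x v := by
    rw [matrixFDeriv_mul (f := fun _ => A⁻¹) (fun _ _ => differentiableAt_const _) hf,
      matrixFDeriv_const, Matrix.zero_mul, zero_add]
  have htrace (y : E) : (A⁻¹ * f y - 1).trace = (A⁻¹ * f y).trace - Fintype.card n := by
    rw [trace_sub, trace_one]
  have htrace_diff : DifferentiableAt ℝ (fun y => (A⁻¹ * f y).trace) x := by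
    simp only [trace, diag_apply]
    exact DifferentiableAt.fun_sum fun i _ => hg i i
  have hlog := (differentiableAt_matrix_det hg).log hgx.ne_zero
  simp only [logDetDivergence, htrace]
  rw [fderiv_fun_sub (htrace_diff.sub_const _) hlog, _root_.sub_apply,
    fderiv_sub_const, fderiv_matrix_trace (fun i => hg i i), fderiv_log_det hg hgx, hDg,
    Matrix.mul_inv_rev, nonsing_inv_nonsing_inv A hA, Matrix.mul_assoc,
    mul_nonsing_inv_cancel_left _ _ hA, Matrix.sub_mul, trace_sub]

end Real

theorem stmt3_general (d d₀ : ℕ) (Θ : Set (Fin d₀ → ℝ)) (hΘ : IsOpen Θ)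
    (S : (Fin d₀ → ℝ) → Matrix (Fin d) (Fin d) ℝ)
    (hS : ∀ a b, ContDiffOn ℝ 2 (fun θ => S θ a b) Θ)
    (hpd : ∀ θ ∈ Θ, (S θ).PosDef)
    (θs : Fin d₀ → ℝ) (hθs : θs ∈ Θ)
    (Q : (Fin d₀ → ℝ) → ℝ)
    (hQ : ∀ θ, Q θ = ((S θs)⁻¹ * S θ - 1).trace - Real.log ((S θs)⁻¹ * S θ).det)
    (Sd : Fin d₀ → Matrix (Fin d) (Fin d) ℝ)
    (hSd : ∀ i, Sd i = Matrix.of fun a b =>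
      fderiv ℝ (fun θ => S θ a b) θs (Pi.single i 1)) :
    ∀ i j : Fin d₀,
      fderiv ℝ (fun θ => fderiv ℝ Q θ (Pi.single i 1)) θs (Pi.single j 1) =
        (Sd i * (S θs)⁻¹ * Sd j * (S θs)⁻¹).trace := by
  intro i j
  have hSd' : ∀ i, Sd i = matrixFDeriv S θs (Pi.single i 1) := hSd
  have hSθ : ∀ θ ∈ Θ, ∀ a b, ContDiffAt ℝ 2 (fun θ => S θ a b) θ :=
    fun θ hθ a b => (hS a b).contDiffAt (hΘ.mem_nhds hθ)
  have hunit : ∀ θ ∈ Θ, IsUnit (S θ).det := fun θ hθ => (hpd θ hθ).det_pos.ne'.isUnit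
  have hdiff : ∀ θ ∈ Θ, ∀ a b, DifferentiableAt ℝ (fun θ => S θ a b) θ :=
    fun θ hθ a b => (hSθ θ hθ a b).differentiableAt two_ne_zero
  have hgrad : (fun θ => fderiv ℝ Q θ (Pi.single i 1)) =ᶠ[nhds θs]
      fun θ => (((S θs)⁻¹ - (S θ)⁻¹) * matrixFDeriv S θ (Pi.single i 1)).trace := by
    filter_upwards [hΘ.mem_nhds hθs] with θ hθ
    rw [show Q = fun θ => logDetDivergence (S θs) (S θ) from funext hQ,
      fderiv_logDetDivergence (hunit θs hθs) (hdiff θ hθ) (hunit θ hθ)]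
  have hcoef : ∀ a b, DifferentiableAt ℝ (fun θ => ((S θs)⁻¹ - (S θ)⁻¹) a b) θs :=
    fun a b => (differentiableAt_matrix_inv_apply (hdiff θs hθs) (hunit θs hθs) a b).const_sub _
  have hDS : ∀ a b, DifferentiableAt ℝ (fun θ => matrixFDeriv S θ (Pi.single i 1) a b) θs :=
    fun a b => (((hSθ θs hθs a b).fderiv_right le_rfl).clm_apply contDiffAt_const).differentiableAt
      one_ne_zero
  rw [hgrad.fderiv_eq,
    fderiv_matrix_trace fun a => differentiableAt_matrix_mul_apply hcoef hDS a a,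
    matrixFDeriv_mul hcoef hDS, sub_self, Matrix.zero_mul, add_zero, matrixFDeriv_const_sub,
    matrixFDeriv_inv (hdiff θs hθs) (hunit θs hθs), neg_neg, hSd', hSd', trace_mul_comm]
  simp only [Matrix.mul_assoc]

/-- Let `S : Θ → M_d(ℝ)` be twice continuously differentiable on an open set
`Θ ⊆ ℝ^{d₀}` with symmetric positive definite values, and `θ* ∈ Θ`. Then the Hessian
at `θ*` of `Q(θ) = Tr(S(θ*)⁻¹ S(θ) - I) - log det (S(θ*)⁻¹ S(θ))` has entries
`Ξ_{ij} = Tr((∂ᵢS) S⁻¹ (∂ⱼS) S⁻¹)` evaluated at `θ*`. -/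
theorem stmt3 (d d₀ : ℕ) (Θ : Set (Fin d₀ → ℝ)) (hΘ : IsOpen Θ)
    (S : (Fin d₀ → ℝ) → Matrix (Fin d) (Fin d) ℝ)
    (hS : ∀ a b, ContDiffOn ℝ 2 (fun θ => S θ a b) Θ)
    (hsymm : ∀ θ ∈ Θ, (S θ).IsSymm)
    (hpd : ∀ θ ∈ Θ, (S θ).PosDef)
    (θs : Fin d₀ → ℝ) (hθs : θs ∈ Θ)
    (Q : (Fin d₀ → ℝ) → ℝ)
    (hQ : ∀ θ, Q θ = ((S θs)⁻¹ * S θ - 1).trace - Real.log ((S θs)⁻¹ * S θ).det)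
    (Sd : Fin d₀ → Matrix (Fin d) (Fin d) ℝ)
    (hSd : ∀ i, Sd i = Matrix.of fun a b =>
      fderiv ℝ (fun θ => S θ a b) θs (Pi.single i 1)) :
    ∀ i j : Fin d₀,
      fderiv ℝ (fun θ => fderiv ℝ Q θ (Pi.single i 1)) θs (Pi.single j 1) =
        (Sd i * (S θs)⁻¹ * Sd j * (S θs)⁻¹).trace :=
  stmt3_general d d₀ Θ hΘ S hS hpd θs hθs Q hQ Sd hSd
end

section
/- The function f(x) = (3/2) e^{|x|} (1 - Φ((3/2)√|x|)) - ½ (1 - Φ(½ √|x|)), where Φ is the standard normal distribution function, is nonnegative on ℝ. -/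
/-!
Write `G a = ∫_a^∞ e^{-u²/2} du`; with `t = √|x|` the claim is `G (t/2) ≤ 3 e^{t²} G (3t/2)`.
The substitution `u = (v + 4t)/3` maps `(t/2, ∞)` onto `(3t/2, ∞)` with Jacobian `1/3`, and after
it the inequality holds pointwise, since `t² - u²/2 + v²/2 = (2v - t)²/9`.
-/

open MeasureTheory Set Real

/-- Standard normal distribution function. -/
noncomputable def stdNormalCdf (x : ℝ) : ℝ :=
  ∫ u in Set.Iic x, Real.exp (-u ^ 2 / 2) / Real.sqrt (2 * Real.pi)

section Substitution

variable {E : Type*} [NormedAddCommGroup E] [NormedSpace ℝ E]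

theorem integral_comp_add_right_Ioi (g : ℝ → E) (a d : ℝ) :
    ∫ x in Ioi a, g (x + d) = ∫ x in Ioi (a + d), g x := by
  simpa using (measurePreserving_add_right volume d).setIntegral_preimage_emb
    (measurableEmbedding_addRight d) g (Ioi (a + d))

theorem integral_comp_mul_add_Ioi (g : ℝ → E) (a d : ℝ) {c : ℝ} (hc : 0 < c) :
    ∫ x in Ioi a, g (c * x + d) = c⁻¹ • ∫ x in Ioi (c * a + d), g x := by
  rw [integral_comp_mul_left_Ioi (fun y ↦ g (y + d)) a hc, integral_comp_add_right_Ioi]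

end Substitution

theorem integrable_exp_neg_sq_div_two : Integrable fun u : ℝ ↦ exp (-u ^ 2 / 2) := by
  simpa [neg_div, div_eq_inv_mul] using integrable_exp_neg_mul_sq (b := 1 / 2) (by norm_num)

theorem integral_exp_neg_sq_div_two : ∫ u : ℝ, exp (-u ^ 2 / 2) = √(2 * π) := by
  simpa [neg_div, div_eq_inv_mul, mul_comm] using integral_gaussian (1 / 2)

noncomputable def gaussianTail (a : ℝ) : ℝ := ∫ u in Ioi a, exp (-u ^ 2 / 2)

theorem one_sub_stdNormalCdf (a : ℝ) : 1 - stdNormalCdf a = gaussianTail a / √(2 * π) := by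
  have hpos : 0 < √(2 * π) := by positivity
  have hsplit := intervalIntegral.integral_Iic_add_Ioi (b := a)
    integrable_exp_neg_sq_div_two.integrableOn integrable_exp_neg_sq_div_two.integrableOn
  rw [integral_exp_neg_sq_div_two] at hsplit
  rw [stdNormalCdf, integral_div, gaussianTail, eq_div_iff hpos.ne', sub_mul,
    div_mul_cancel₀ _ hpos.ne']
  linarith

theorem exp_neg_sq_div_two_le (t v : ℝ) :
    exp (-v ^ 2 / 2) ≤ exp (t ^ 2) * exp (-(3⁻¹ * v + 4 * t / 3) ^ 2 / 2) := by
  rw [← exp_add, exp_le_exp]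
  nlinarith [sq_nonneg (2 * v - t)]

theorem gaussianTail_half_le (t : ℝ) :
    gaussianTail (t / 2) ≤ 3 * exp (t ^ 2) * gaussianTail (3 * t / 2) := by
  have hint : Integrable fun v : ℝ ↦ exp (-(3⁻¹ * v + 4 * t / 3) ^ 2 / 2) :=
    (integrable_exp_neg_sq_div_two.comp_add_right (4 * t / 3)).comp_mul_left' (by norm_num)
  calc gaussianTail (t / 2)
      ≤ ∫ v in Ioi (t / 2), exp (t ^ 2) * exp (-(3⁻¹ * v + 4 * t / 3) ^ 2 / 2) :=
        setIntegral_mono integrable_exp_neg_sq_div_two.integrableOn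
          (hint.const_mul _).integrableOn (exp_neg_sq_div_two_le t)
    _ = 3 * exp (t ^ 2) * gaussianTail (3⁻¹ * (t / 2) + 4 * t / 3) := by
        rw [integral_const_mul, integral_comp_mul_add_Ioi (fun u ↦ exp (-u ^ 2 / 2)) _ _
          (by norm_num : (0 : ℝ) < 3⁻¹), gaussianTail, smul_eq_mul, inv_inv]
        ring
    _ = 3 * exp (t ^ 2) * gaussianTail (3 * t / 2) := by ring_nf

/-- The density `f(x) = (3/2) e^{|x|} (1 - Φ((3/2)√|x|)) - ½ (1 - Φ(½√|x|))`
of the argmin of two-sided Brownian motion with drift is nonnegative on `ℝ`. -/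
theorem stmt12 (f : ℝ → ℝ)
    (hf : ∀ x, f x = (3 / 2) * Real.exp |x| * (1 - stdNormalCdf ((3 / 2) * Real.sqrt |x|))
      - (1 / 2) * (1 - stdNormalCdf ((1 / 2) * Real.sqrt |x|))) :
    ∀ x, 0 ≤ f x := by
  intro x
  have hexp : exp |x| = exp (√|x| ^ 2) := by rw [sq_sqrt (abs_nonneg x)]
  have htail := gaussianTail_half_le √|x|
  rw [hf x, hexp, one_sub_stdNormalCdf, one_sub_stdNormalCdf, sub_nonneg, ← mul_div_assoc,
    ← mul_div_assoc, show 3 / 2 * √|x| = 3 * √|x| / 2 by ring,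
    show 1 / 2 * √|x| = √|x| / 2 by ring]
  exact div_le_div_of_nonneg_right (by linarith) (sqrt_nonneg _)
end

section
/- The function f(x) = (3/2) e^{|x|} (1 - Φ((3/2)√|x|)) - ½ (1 - Φ(½ √|x|)) integrates to 1 over ℝ, i.e. ∫_{-∞}^{∞} f(x) dx = 1. -/
/-!
Write `Q = 1 - Φ` and `φ` for the standard normal density, so that `f x = g |x|` with
`g y = (3/2) e^y Q((3/2)√y) - (1/2) Q((1/2)√y)`; it suffices to show `∫_0^∞ g = 1/2`.
With `s = √y`, the function `T y = ((y+5)/2) Q(s/2) - s φ(s/2) - (3/2) e^y Q(3s/2)` is an explicit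
antiderivative of `-g`: the identity `e^y φ(3s/2) = φ(s/2)` makes every `φ`-term of `T'` cancel.
Now `T 0 = 1/2` since `Q 0 = 1/2`, and Mills' inequality `Q t ≤ φ t / t` bounds both `g` and `T`
by multiples of `y e^{-y/8}`, so `g` is integrable and `T → 0`, whence `∫_0^∞ g = T 0 = 1/2`.
-/

open Real MeasureTheory Set Filter Topology Asymptotics ProbabilityTheory

noncomputable def stdNormalPDF (u : ℝ) : ℝ := exp (-u ^ 2 / 2) / √(2 * π)

noncomputable def stdNormalTail (t : ℝ) : ℝ := ∫ u in Ioi t, stdNormalPDF u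

lemma stdNormalPDF_eq_gaussianPDFReal : stdNormalPDF = gaussianPDFReal 0 1 := by
  ext u
  simp [stdNormalPDF, gaussianPDFReal, div_eq_inv_mul]

lemma stdNormalPDF_nonneg (u : ℝ) : 0 ≤ stdNormalPDF u := by
  unfold stdNormalPDF; positivity

lemma integrable_stdNormalPDF : Integrable stdNormalPDF :=
  stdNormalPDF_eq_gaussianPDFReal ▸ integrable_gaussianPDFReal 0 1

lemma integral_stdNormalPDF : ∫ u, stdNormalPDF u = 1 :=
  stdNormalPDF_eq_gaussianPDFReal ▸ integral_gaussianPDFReal_eq_one 0 one_ne_zero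

@[fun_prop]
lemma continuous_stdNormalPDF : Continuous stdNormalPDF := by
  unfold stdNormalPDF; fun_prop

lemma hasDerivAt_stdNormalPDF (u : ℝ) : HasDerivAt stdNormalPDF (-u * stdNormalPDF u) u := by
  have h : HasDerivAt stdNormalPDF _ u :=
    (((hasDerivAt_pow 2 u).fun_neg.div_const 2).exp).div_const √(2 * π)
  refine h.congr_deriv ?_
  simp only [stdNormalPDF]
  ring

lemma stdNormalPDF_le_exp (u : ℝ) : stdNormalPDF u ≤ exp (-u ^ 2 / 2) :=
  div_le_self (exp_pos _).le (one_le_sqrt.2 (by nlinarith [pi_gt_three]))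

lemma tendsto_stdNormalPDF_atTop : Tendsto stdNormalPDF atTop (𝓝 0) := by
  have h : Tendsto (fun u : ℝ => -u ^ 2 / 2) atTop atBot :=
    (tendsto_neg_atTop_atBot.comp ((tendsto_pow_atTop two_ne_zero).atTop_div_const two_pos)).congr
      fun u => by simp [neg_div]
  exact zero_div √(2 * π) ▸ (tendsto_exp_atBot.comp h).div_const √(2 * π)

lemma one_sub_stdNormalCdf_s13 (t : ℝ) : 1 - stdNormalCdf t = stdNormalTail t :=
  sub_eq_of_eq_add' <| integral_stdNormalPDF ▸ (intervalIntegral.integral_Iic_add_Ioi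
    integrable_stdNormalPDF.integrableOn integrable_stdNormalPDF.integrableOn).symm

lemma hasDerivAt_stdNormalTail (t : ℝ) : HasDerivAt stdNormalTail (-stdNormalPDF t) t := by
  have h : stdNormalTail = fun x => stdNormalTail 0 - ∫ u in 0..x, stdNormalPDF u := by
    ext x
    rw [← intervalIntegral.integral_Ioi_sub_Ioi' integrable_stdNormalPDF.integrableOn
      integrable_stdNormalPDF.integrableOn, stdNormalTail, stdNormalTail]
    ring
  rw [h]
  exact (intervalIntegral.integral_hasDerivAt_right integrable_stdNormalPDF.intervalIntegrable
    continuous_stdNormalPDF.aestronglyMeasurable.stronglyMeasurableAtFilter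
    continuous_stdNormalPDF.continuousAt).const_sub _

@[fun_prop]
lemma continuous_stdNormalTail : Continuous stdNormalTail :=
  continuous_iff_continuousAt.2 fun t => (hasDerivAt_stdNormalTail t).continuousAt

lemma stdNormalTail_nonneg (t : ℝ) : 0 ≤ stdNormalTail t :=
  setIntegral_nonneg measurableSet_Ioi fun u _ => stdNormalPDF_nonneg u

lemma stdNormalTail_zero : stdNormalTail 0 = 1 / 2 := by
  have h : ∫ u, stdNormalPDF |u| = 2 * stdNormalTail 0 := integral_comp_abs
  have h_even (u : ℝ) : stdNormalPDF |u| = stdNormalPDF u := by simp [stdNormalPDF]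
  simp only [h_even, integral_stdNormalPDF] at h
  linarith

lemma integrable_mul_stdNormalPDF : Integrable fun u => u * stdNormalPDF u := by
  convert (integrable_mul_exp_neg_mul_sq (b := 1 / 2) (by norm_num)).div_const √(2 * π) using 2
  simp only [stdNormalPDF]
  ring_nf

lemma integral_Ioi_mul_stdNormalPDF (t : ℝ) : ∫ u in Ioi t, u * stdNormalPDF u = stdNormalPDF t := by
  have h := integral_Ioi_of_hasDerivAt_of_tendsto (f := fun u => -stdNormalPDF u) (a := t)
    continuous_stdNormalPDF.neg.continuousWithinAt
    (fun u _ => by simpa using (hasDerivAt_stdNormalPDF u).fun_neg)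
    integrable_mul_stdNormalPDF.integrableOn
    (by simpa using tendsto_stdNormalPDF_atTop.neg)
  simpa using h

lemma stdNormalTail_le_stdNormalPDF_div {t : ℝ} (ht : 0 < t) :
    stdNormalTail t ≤ stdNormalPDF t / t := by
  rw [← integral_Ioi_mul_stdNormalPDF, ← integral_div]
  refine setIntegral_mono_on integrable_stdNormalPDF.integrableOn
    (integrable_mul_stdNormalPDF.div_const t).integrableOn measurableSet_Ioi fun u hu => ?_
  rw [le_div_iff₀ ht]
  nlinarith [stdNormalPDF_nonneg u, hu.out]

lemma stdNormalPDF_three_halves_mul_sqrt {x : ℝ} (hx : 0 ≤ x) :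
    stdNormalPDF (3 / 2 * √x) = exp (-x) * stdNormalPDF (1 / 2 * √x) := by
  simp only [stdNormalPDF, mul_pow, sq_sqrt hx, ← mul_div_assoc, ← exp_add]
  ring_nf

lemma stdNormalPDF_half_mul_sqrt_le {x : ℝ} (hx : 0 ≤ x) :
    stdNormalPDF (1 / 2 * √x) ≤ exp (-(1 / 8) * x) :=
  (stdNormalPDF_le_exp _).trans_eq (by rw [mul_pow, sq_sqrt hx]; ring_nf)

lemma exp_mul_stdNormalTail_three_halves_mul_sqrt_le {x : ℝ} (hx : 1 ≤ x) :
    exp x * stdNormalTail (3 / 2 * √x) ≤ exp (-(1 / 8) * x) := by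
  have hs : 1 ≤ √x := one_le_sqrt.2 hx
  calc exp x * stdNormalTail (3 / 2 * √x)
      ≤ exp x * (stdNormalPDF (3 / 2 * √x) / (3 / 2 * √x)) := by
        gcongr; exact stdNormalTail_le_stdNormalPDF_div (by positivity)
    _ ≤ exp x * stdNormalPDF (3 / 2 * √x) := by
        gcongr; exact div_le_self (stdNormalPDF_nonneg _) (by linarith)
    _ = stdNormalPDF (1 / 2 * √x) := by
        rw [stdNormalPDF_three_halves_mul_sqrt (by linarith), ← mul_assoc, ← exp_add, add_neg_cancel,
          exp_zero, one_mul]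
    _ ≤ exp (-(1 / 8) * x) := stdNormalPDF_half_mul_sqrt_le (by linarith)

lemma stdNormalTail_half_mul_sqrt_le {x : ℝ} (hx : 1 ≤ x) :
    stdNormalTail (1 / 2 * √x) ≤ 2 * exp (-(1 / 8) * x) := by
  have hs : 1 ≤ √x := one_le_sqrt.2 hx
  calc stdNormalTail (1 / 2 * √x)
      ≤ stdNormalPDF (1 / 2 * √x) / (1 / 2 * √x) := stdNormalTail_le_stdNormalPDF_div (by positivity)
    _ ≤ 2 * stdNormalPDF (1 / 2 * √x) := by
        rw [div_le_iff₀ (by positivity)]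
        nlinarith [stdNormalPDF_nonneg (1 / 2 * √x)]
    _ ≤ 2 * exp (-(1 / 8) * x) := by gcongr; exact stdNormalPDF_half_mul_sqrt_le (by linarith)

noncomputable def argminDensity (y : ℝ) : ℝ :=
  3 / 2 * exp y * stdNormalTail (3 / 2 * √y) - 1 / 2 * stdNormalTail (1 / 2 * √y)

noncomputable def argminTail (y : ℝ) : ℝ :=
  (y + 5) / 2 * stdNormalTail (1 / 2 * √y) - √y * stdNormalPDF (1 / 2 * √y)
    - 3 / 2 * exp y * stdNormalTail (3 / 2 * √y)

lemma argminTail_zero : argminTail 0 = 1 / 2 := by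
  simp only [argminTail, sqrt_zero, mul_zero, stdNormalTail_zero]
  norm_num

lemma hasDerivAt_argminTail {y : ℝ} (hy : 0 < y) :
    HasDerivAt argminTail (-argminDensity y) y := by
  have hsqrt : HasDerivAt (fun y => √y) (1 / (2 * √y)) y := hasDerivAt_sqrt hy.ne'
  have hQ₁ := (hasDerivAt_stdNormalTail _).comp y (hsqrt.const_mul (1 / 2 : ℝ))
  have hQ₃ := (hasDerivAt_stdNormalTail _).comp y (hsqrt.const_mul (3 / 2 : ℝ))
  have hφ := (hasDerivAt_stdNormalPDF _).comp y (hsqrt.const_mul (1 / 2 : ℝ))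
  have h := ((((hasDerivAt_id y).add_const 5).div_const 2).mul hQ₁).sub (hsqrt.mul hφ) |>.sub
    (((hasDerivAt_exp y).const_mul (3 / 2 : ℝ)).mul hQ₃)
  refine h.congr_deriv ?_
  simp only [argminDensity, Function.comp_def, stdNormalPDF_three_halves_mul_sqrt hy.le, id]
  field_simp
  have hexp : exp y * exp (-y) = 1 := by rw [← exp_add, add_neg_cancel, exp_zero]
  linear_combination stdNormalPDF (√y / 2) * sq_sqrt hy.le + 9 * stdNormalPDF (√y / 2) * hexp

@[fun_prop]
lemma continuous_argminDensity : Continuous argminDensity := by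
  unfold argminDensity; fun_prop

@[fun_prop]
lemma continuous_argminTail : Continuous argminTail := by
  unfold argminTail; fun_prop

lemma argminDensity_isBigO : argminDensity =O[atTop] fun x => exp (-(1 / 8) * x) := by
  refine IsBigO.of_bound (3 / 2) ?_
  filter_upwards [eventually_ge_atTop 1] with x hx
  have ha := exp_mul_stdNormalTail_three_halves_mul_sqrt_le hx
  have hb := stdNormalTail_half_mul_sqrt_le hx
  have ha₀ := mul_nonneg (exp_pos x).le (stdNormalTail_nonneg (3 / 2 * √x))
  have hb₀ := stdNormalTail_nonneg (1 / 2 * √x)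
  rw [norm_of_nonneg (exp_pos _).le, norm_eq_abs, abs_le, argminDensity]
  constructor <;> linarith

lemma argminTail_isBigO : argminTail =O[atTop] fun x => x * exp (-(1 / 8) * x) := by
  refine IsBigO.of_bound 9 ?_
  filter_upwards [eventually_ge_atTop 1] with x hx
  have ha := exp_mul_stdNormalTail_three_halves_mul_sqrt_le hx
  have hb := stdNormalTail_half_mul_sqrt_le hx
  have hP := stdNormalPDF_half_mul_sqrt_le (x := x) (by linarith)
  have ha₀ := mul_nonneg (exp_pos x).le (stdNormalTail_nonneg (3 / 2 * √x))
  have hb₀ := stdNormalTail_nonneg (1 / 2 * √x)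
  have hP₀ := stdNormalPDF_nonneg (1 / 2 * √x)
  have hs : √x ≤ x := sqrt_le_self_iff.2 (Or.inr hx)
  have hE := exp_pos (-(1 / 8) * x)
  rw [norm_eq_abs, norm_eq_abs, abs_of_nonneg (mul_nonneg (by linarith) hE.le), abs_le, argminTail]
  constructor <;> nlinarith [sqrt_nonneg x]

lemma tendsto_argminTail_atTop : Tendsto argminTail atTop (𝓝 0) :=
  argminTail_isBigO.trans_tendsto <| by
    simpa using tendsto_rpow_mul_exp_neg_mul_atTop_nhds_zero 1 (1 / 8) (by norm_num)

lemma integral_Ioi_argminDensity : ∫ y in Ioi 0, argminDensity y = 1 / 2 := by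
  have h := integral_Ioi_of_hasDerivAt_of_tendsto (f := fun y => -argminTail y) (a := 0)
    (by fun_prop) (fun y hy => by simpa using (hasDerivAt_argminTail hy).fun_neg)
    (integrable_of_isBigO_exp_neg (by norm_num) (by fun_prop) argminDensity_isBigO)
    (by simpa using tendsto_argminTail_atTop.neg)
  rw [h, argminTail_zero]
  norm_num

/-- The density `f(x) = (3/2) e^{|x|} (1 - Φ((3/2)√|x|)) - ½ (1 - Φ(½√|x|))`
integrates to `1` over `ℝ`. -/
theorem stmt13 (f : ℝ → ℝ)
    (hf : ∀ x, f x = (3 / 2) * Real.exp |x| * (1 - stdNormalCdf ((3 / 2) * Real.sqrt |x|))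
      - (1 / 2) * (1 - stdNormalCdf ((1 / 2) * Real.sqrt |x|))) :
    ∫ x, f x = 1 := by
  have hf_abs : f = fun x => argminDensity |x| := by
    ext x
    simp only [hf, argminDensity, one_sub_stdNormalCdf_s13]
  rw [hf_abs, integral_comp_abs (f := argminDensity), integral_Ioi_argminDensity]
  norm_num
end
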